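/- arXiv:1006.5298 — 2 statements merged into one kernel-verified Lean document; each statement's English description precedes it below -/
import Mathlib

section
/- Let n ≥ 1, 1 < p < ∞, θ ∈ A_p, and let g be a holomorphic function on B. Then there exists a constant C > 0 such that for every f ∈ H^p(θ) the product gf belongs to H^p(θ) with ‖gf‖_{H^p(θ)} ≤ C ‖f‖_{H^p(θ)}, if and only if g is bounded on B. -/
open MeasureTheory Metric Set
open scoped ENNReal ComplexConjugate

noncomputable section

/-- `ℂⁿ` as a Hermitian Euclidean space. -/
abbrev Cn (n : ℕ) := EuclideanSpace ℂ (Fin n)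

instance (n : ℕ) : InnerProductSpace ℝ (Cn n) := InnerProductSpace.complexToReal
instance (n : ℕ) : MeasurableSpace (Cn n) := borel _
instance (n : ℕ) : BorelSpace (Cn n) := ⟨rfl⟩
/-- Lebesgue measure `ν` on `ℂⁿ`. -/
instance (n : ℕ) : MeasureSpace (Cn n) := measureSpaceOfInnerProductSpace

/-- The open unit ball `B` of `ℂⁿ`. -/
def uball (n : ℕ) : Set (Cn n) := Metric.ball 0 1

/-- The unit sphere `∂B` of `ℂⁿ`, as a type. -/
abbrev Sph (n : ℕ) := Metric.sphere (0 : Cn n) 1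

/-- The surface measure `σ` on the unit sphere. -/
def sphMeasure (n : ℕ) : Measure (Sph n) := (volume : Measure (Cn n)).toSphere

/-- The pairing `⟨z,w⟩ = Σ_j z_j conj (w_j)`. -/
def herm {n : ℕ} (z w : Cn n) : ℂ := ∑ j, z j * (starRingEnd ℂ) (w j)

/-- The nonisotropic ball `I_{ζ,r} = {η ∈ ∂B : |1 − ⟨η,ζ⟩| < r}`. -/
def Icap {n : ℕ} (ζ : Cn n) (r : ℝ) : Set (Sph n) :=
  {η : Sph n | ‖(1 : ℂ) - herm (η : Cn n) ζ‖ < r}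

open Classical in
/-- `I_z = I_{z/|z|, 1−|z|²}` for `0 ≠ z ∈ B`, and `I_0 = ∂B`. -/
def Iz {n : ℕ} (z : Cn n) : Set (Sph n) :=
  if z = 0 then Set.univ else Icap (‖z‖⁻¹ • z) (1 - ‖z‖ ^ 2)

/-- `θ(E) = ∫_E θ dσ` (as an extended real). -/
def wMeas {n : ℕ} (θ : Sph n → ℝ) (E : Set (Sph n)) : ℝ≥0∞ :=
  ∫⁻ ζ in E, ENNReal.ofReal (θ ζ) ∂(sphMeasure n)

/-- The average `Θ(z) = θ(I_z)/σ(I_z)`. -/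
def avgW {n : ℕ} (θ : Sph n → ℝ) (z : Cn n) : ℝ≥0∞ :=
  wMeas θ (Iz z) / sphMeasure n (Iz z)

/-- The dual weight `θ' = θ^{−p'/p}` where `p' = p/(p−1)`. -/
def dualW {n : ℕ} (p : ℝ) (θ : Sph n → ℝ) : Sph n → ℝ :=
  fun ζ => θ ζ ^ (-((p / (p - 1)) / p))

/-- The Muckenhoupt class `A_p` on the sphere: `θ` is positive a.e., integrable, with
integrable dual weight `θ' = θ^{-p'/p}`, and `sup_{z∈B} Θ(z)^{1/p} Θ'(z)^{1/p'} < ∞`. -/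
def MemAp {n : ℕ} (p : ℝ) (θ : Sph n → ℝ) : Prop :=
  Measurable θ ∧ (∀ᵐ ζ ∂(sphMeasure n), 0 < θ ζ) ∧
    Integrable θ (sphMeasure n) ∧ Integrable (dualW p θ) (sphMeasure n) ∧
    ∃ C : ℝ≥0∞, C ≠ ⊤ ∧ ∀ z ∈ uball n,
      avgW θ z ^ (1 / p) * avgW (dualW p θ) z ^ (1 - 1 / p) ≤ C

/-- `∫_{∂B} |f(rζ)|^p θ(ζ) dσ(ζ)`. -/
def hardyFn {n : ℕ} (p : ℝ) (θ : Sph n → ℝ) (f : Cn n → ℂ) (r : ℝ) : ℝ≥0∞ :=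
  ∫⁻ ζ : Sph n, ENNReal.ofReal (‖f (r • (ζ : Cn n))‖ ^ p) * ENNReal.ofReal (θ ζ)
    ∂(sphMeasure n)

/-- The weighted Hardy norm `‖f‖_{H^p(θ)}` (as an extended real). -/
def hardyNorm {n : ℕ} (p : ℝ) (θ : Sph n → ℝ) (f : Cn n → ℂ) : ℝ≥0∞ :=
  (⨆ r ∈ Set.Ioo (0 : ℝ) 1, hardyFn p θ f r) ^ (1 / p)

/-- Membership in the weighted Hardy space `H^p(θ)`: holomorphic with finite norm. -/
def MemHp {n : ℕ} (p : ℝ) (θ : Sph n → ℝ) (f : Cn n → ℂ) : Prop :=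
  DifferentiableOn ℂ f (uball n) ∧ hardyNorm p θ f < ⊤

/-- The unweighted Hardy norm `‖f‖_{H^q}` (as an extended real). -/
def hardyNormU {n : ℕ} (q : ℝ) (f : Cn n → ℂ) : ℝ≥0∞ :=
  (⨆ r ∈ Set.Ioo (0 : ℝ) 1,
    ∫⁻ ζ : Sph n, ENNReal.ofReal (‖f (r • (ζ : Cn n))‖ ^ q) ∂(sphMeasure n)) ^ (1 / q)

/-- Membership in `H^∞`: bounded and holomorphic on the ball. -/
def MemHinf {n : ℕ} (g : Cn n → ℂ) : Prop :=
  DifferentiableOn ℂ g (uball n) ∧ ∃ M : ℝ, ∀ z ∈ uball n, ‖g z‖ ≤ M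

/-- The corona condition `inf_{z∈B} |g(z)| > 0` for a tuple `g = (g_1,…,g_m)`,
where `|g(z)| = (Σ_k |g_k(z)|²)^{1/2}`. -/
def CoronaData {n m : ℕ} (g : Fin m → Cn n → ℂ) : Prop :=
  ∃ δ : ℝ, 0 < δ ∧ ∀ z ∈ uball n, δ ≤ Real.sqrt (∑ k, ‖g k z‖ ^ 2)

/-- The Morrey norm `‖f‖_{M^{p,s}}` of a function on the sphere (as an extended real). -/
def morreyNorm (n : ℕ) (p s : ℝ) (f : Sph n → ℂ) : ℝ≥0∞ :=
  ⨆ (ζ : Sph n) (ε : ℝ) (_ : 0 < ε),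
    (ENNReal.ofReal (ε ^ (s * p - n)) *
      ∫⁻ η in Icap (ζ : Cn n) ε, ENNReal.ofReal (‖f η‖ ^ p) ∂(sphMeasure n)) ^ (1 / p)

/-- The holomorphic Morrey norm `‖f‖_{HM^{p,s}} = sup_{0<r<1} ‖f_r‖_{M^{p,s}}`. -/
def hmNorm {n : ℕ} (p s : ℝ) (f : Cn n → ℂ) : ℝ≥0∞ :=
  ⨆ r ∈ Set.Ioo (0 : ℝ) 1, morreyNorm n p s (fun ζ => f (r • (ζ : Cn n)))

/-- Membership in the holomorphic Morrey space `HM^{p,s}`. -/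
def MemHM {n : ℕ} (p s : ℝ) (f : Cn n → ℂ) : Prop :=
  DifferentiableOn ℂ f (uball n) ∧ hmNorm p s f < ⊤

/-- The complex partial derivative `D_j f = ∂f/∂z_j`. -/
def Dj {n : ℕ} (f : Cn n → ℂ) (j : Fin n) (z : Cn n) : ℂ :=
  fderiv ℂ f z (EuclideanSpace.single j 1)

/-- `|∂f(z)| = Σ_j |D_j f(z)|`. -/
def delNorm {n : ℕ} (f : Cn n → ℂ) (z : Cn n) : ℝ := ∑ j, ‖Dj f j z‖

/-- The tangential derivative `D_{i,j} f(z) = conj(z_j) D_i f(z) − conj(z_i) D_j f(z)`. -/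
def Dij {n : ℕ} (f : Cn n → ℂ) (i j : Fin n) (z : Cn n) : ℂ :=
  (starRingEnd ℂ) (z j) * Dj f i z - (starRingEnd ℂ) (z i) * Dj f j z

/-- `|∂_T f(z)| = Σ_{i<j} |D_{i,j} f(z)|`. -/
def delTNorm {n : ℕ} (f : Cn n → ℂ) (z : Cn n) : ℝ :=
  ∑ i, ∑ j, if i < j then ‖Dij f i j z‖ else 0

/-- The Poisson–Szegő integral `P(φ)(z)`. -/
def poisson {n : ℕ} (φ : Sph n → ℂ) (z : Cn n) : ℂ :=
  ∫ ζ : Sph n,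
    (((1 - ‖z‖ ^ 2) ^ n / ‖(1 : ℂ) - herm z (ζ : Cn n)‖ ^ (2 * n) : ℝ) : ℂ) * φ ζ
      ∂(sphMeasure n)

/-- The admissible region `Γ_ζ = {z ∈ B : |1 − ⟨z,ζ⟩| < 1 − |z|²}`. -/
def admRegion {n : ℕ} (ζ : Sph n) : Set (Cn n) :=
  {z ∈ uball n | ‖(1 : ℂ) - herm z (ζ : Cn n)‖ < 1 - ‖z‖ ^ 2}

/-- The tent `T(A) = B \ ∪_{ζ∉A} Γ_ζ` over `A ⊆ ∂B`. -/
def tent {n : ℕ} (A : Set (Sph n)) : Set (Cn n) :=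
  uball n \ ⋃ (ζ : Sph n) (_ : ζ ∉ A), admRegion ζ

/-- `Î_z = T(I_z)`. -/
def hatI {n : ℕ} (z : Cn n) : Set (Cn n) := tent (Iz z)

/-- `φ(w,z) = |1 − ⟨z,w⟩|² − (1−|w|²)(1−|z|²)`. -/
def phiK {n : ℕ} (w z : Cn n) : ℝ :=
  ‖(1 : ℂ) - herm z w‖ ^ 2 - (1 - ‖w‖ ^ 2) * (1 - ‖z‖ ^ 2)

/-!
If `g` multiplies `H^p(θ)` with bound `C`, then `‖gᵏ‖ ≤ Cᵏ ‖1‖ = Cᵏ θ(∂B)^{1/p}`. On the open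
set `U = {ζ : |g(rζ)| > A}` with `A > C`, Chebyshev's inequality gives
`A^{kp} θ(U) ≤ C^{kp} θ(∂B)` for every `k`, so `θ(U) = 0`. As `θ > 0` a.e. and `σ` charges
nonempty open sets, `U` is empty, i.e. `|g| ≤ C` on `B \ {0}`. Conversely a bound `|g| ≤ M`
gives `|gf|^p ≤ M^p |f|^p` pointwise.
-/

instance (n : ℕ) : (sphMeasure n).IsOpenPosMeasure := by
  unfold sphMeasure
  infer_instance

lemma setLIntegral_ofReal_ne_zero {α : Type*} [TopologicalSpace α] [MeasurableSpace α]
    {μ : Measure α} [μ.IsOpenPosMeasure] {f : α → ℝ} (hf : AEMeasurable f μ)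
    (hpos : ∀ᵐ x ∂μ, 0 < f x) {U : Set α} (hU : IsOpen U) (hne : U.Nonempty) :
    ∫⁻ x in U, ENNReal.ofReal (f x) ∂μ ≠ 0 := by
  intro h
  have hzero : ∀ᵐ x ∂μ.restrict U, ENNReal.ofReal (f x) = 0 :=
    (lintegral_eq_zero_iff' hf.restrict.ennreal_ofReal).1 h
  have hpos' : ∀ᵐ x ∂μ.restrict U, 0 < f x := ae_restrict_of_ae hpos
  have hrestrict : μ.restrict U = 0 := ae_eq_bot.1 <| Filter.eventually_false_iff_eq_bot.1 <|
    (hzero.and hpos').mono fun _ hx => (ENNReal.ofReal_eq_zero.1 hx.1).not_gt hx.2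
  exact hU.measure_ne_zero μ hne (by rwa [Measure.restrict_eq_zero] at hrestrict)

lemma ENNReal.eq_zero_of_forall_pow_mul_le {a c x T : ℝ≥0∞} (hca : c < a) (ha : a ≠ ⊤)
    (hT : T ≠ ⊤) (h : ∀ k : ℕ, a ^ k * x ≤ c ^ k * T) : x = 0 := by
  have ha0 : a ≠ 0 := hca.ne_bot
  have hratio : c / a < 1 := (ENNReal.div_lt_iff (.inl ha0) (.inl ha)).2 (by simpa using hca)
  have hlim : Filter.Tendsto (fun k : ℕ => (c / a) ^ k * T) Filter.atTop (nhds 0) := by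
    simpa using ENNReal.Tendsto.mul_const
      (ENNReal.tendsto_pow_atTop_nhds_zero_of_lt_one hratio) (.inr hT)
  refine nonpos_iff_eq_zero.1 (ge_of_tendsto' hlim fun k => ?_)
  have hdiv : (c / a) ^ k * T = c ^ k * T / a ^ k := by
    rw [div_eq_mul_inv, div_eq_mul_inv, mul_pow, ENNReal.inv_pow]
    ring
  rw [hdiv, ENNReal.le_div_iff_mul_le (.inl (pow_ne_zero k ha0)) (.inl (ENNReal.pow_ne_top ha)),
    mul_comm]
  exact h k

lemma smul_mem_uball {n : ℕ} {r : ℝ} (hr : r ∈ Ioo (0 : ℝ) 1) (ζ : Sph n) :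
    r • (ζ : Cn n) ∈ uball n := by
  rw [uball, mem_ball_zero_iff, norm_smul, Real.norm_of_nonneg hr.1.le,
    mem_sphere_zero_iff_norm.1 ζ.2, mul_one]
  exact hr.2

lemma exists_eq_smul_of_mem_uball {n : ℕ} {z : Cn n} (hz : z ∈ uball n) (hz0 : z ≠ 0) :
    ∃ r ∈ Ioo (0 : ℝ) 1, ∃ ζ : Sph n, z = r • (ζ : Cn n) := by
  have hr : 0 < ‖z‖ := norm_pos_iff.2 hz0
  refine ⟨‖z‖, ⟨hr, mem_ball_zero_iff.1 hz⟩, ⟨‖z‖⁻¹ • z, ?_⟩, ?_⟩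
  · rw [mem_sphere_zero_iff_norm, norm_smul, norm_inv, norm_norm, inv_mul_cancel₀ hr.ne']
  · rw [smul_smul, mul_inv_cancel₀ hr.ne', one_smul]

section Hardy

variable {n : ℕ} {p : ℝ} {θ : Sph n → ℝ}

def IsHardyMultiplier (p : ℝ) (θ : Sph n → ℝ) (g : Cn n → ℂ) (C : ℝ≥0∞) : Prop :=
  ∀ f : Cn n → ℂ, MemHp p θ f →
    MemHp p θ (fun z => g z * f z) ∧ hardyNorm p θ (fun z => g z * f z) ≤ C * hardyNorm p θ f

lemma hardyFn_le_hardyNorm_rpow (hp : p ≠ 0) (f : Cn n → ℂ) {r : ℝ} (hr : r ∈ Ioo (0 : ℝ) 1) :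
    hardyFn p θ f r ≤ hardyNorm p θ f ^ p := by
  rw [hardyNorm, one_div, ENNReal.rpow_inv_rpow hp]
  exact le_biSup (hardyFn p θ f) hr

lemma hardyNorm_one : hardyNorm p θ (fun _ => 1) = wMeas θ univ ^ (1 / p) := by
  have hfn : ∀ r, hardyFn p θ (fun _ => 1) r = wMeas θ univ := by
    simp [hardyFn, wMeas]
  simp only [hardyNorm, hfn]
  rw [biSup_const ⟨1 / 2, by norm_num⟩]

lemma memHp_one (hp : 0 < p) (hθ : Integrable θ (sphMeasure n)) : MemHp p θ (fun _ => 1) := by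
  refine ⟨differentiableOn_const 1, ?_⟩
  rw [hardyNorm_one]
  refine ENNReal.rpow_lt_top_of_nonneg (by positivity) ?_
  simpa [wMeas] using hθ.lintegral_lt_top.ne

lemma ofReal_rpow_mul_wMeas_le_hardyFn (hp : 0 ≤ p) {f : Cn n → ℂ} {r A : ℝ} (hA : 0 ≤ A)
    {U : Set (Sph n)} (hU : MeasurableSet U) (hfU : ∀ ζ ∈ U, A ≤ ‖f (r • (ζ : Cn n))‖) :
    ENNReal.ofReal A ^ p * wMeas θ U ≤ hardyFn p θ f r := by
  rw [wMeas, ← lintegral_const_mul' _ _ (by simp [hp]), hardyFn]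
  refine (setLIntegral_mono' hU fun ζ hζ => ?_).trans (setLIntegral_le_lintegral _ _)
  rw [ENNReal.ofReal_rpow_of_nonneg hA hp]
  gcongr
  exact hfU ζ hζ

lemma hardyFn_mul_le (hp : 0 ≤ p) {g f : Cn n → ℂ} {M : ℝ} (hM0 : 0 ≤ M)
    (hM : ∀ z ∈ uball n, ‖g z‖ ≤ M) {r : ℝ} (hr : r ∈ Ioo (0 : ℝ) 1) :
    hardyFn p θ (fun z => g z * f z) r ≤ ENNReal.ofReal M ^ p * hardyFn p θ f r := by
  rw [hardyFn, hardyFn, ← lintegral_const_mul' _ _ (by simp [hp])]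
  refine lintegral_mono fun ζ => ?_
  rw [← mul_assoc, ENNReal.ofReal_rpow_of_nonneg hM0 hp, norm_mul,
    Real.mul_rpow (norm_nonneg _) (norm_nonneg _), ENNReal.ofReal_mul (by positivity)]
  gcongr
  exact hM _ (smul_mem_uball hr ζ)

lemma hardyNorm_mul_le (hp : 0 < p) {g f : Cn n → ℂ} {M : ℝ} (hM0 : 0 ≤ M)
    (hM : ∀ z ∈ uball n, ‖g z‖ ≤ M) :
    hardyNorm p θ (fun z => g z * f z) ≤ ENNReal.ofReal M * hardyNorm p θ f := by
  have hsup : (⨆ r ∈ Ioo (0 : ℝ) 1, hardyFn p θ (fun z => g z * f z) r) ≤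
      ENNReal.ofReal M ^ p * ⨆ r ∈ Ioo (0 : ℝ) 1, hardyFn p θ f r :=
    iSup₂_le fun r hr => (hardyFn_mul_le hp.le hM0 hM hr).trans (by gcongr; exact le_biSup _ hr)
  calc hardyNorm p θ (fun z => g z * f z)
      ≤ (ENNReal.ofReal M ^ p * ⨆ r ∈ Ioo (0 : ℝ) 1, hardyFn p θ f r) ^ (1 / p) :=
        ENNReal.rpow_le_rpow hsup (by positivity)
    _ = ENNReal.ofReal M * hardyNorm p θ f := by
        rw [ENNReal.mul_rpow_of_nonneg _ _ (by positivity), one_div,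
          ENNReal.rpow_rpow_inv hp.ne', hardyNorm, one_div]

lemma isHardyMultiplier_of_norm_le (hp : 0 < p) {g : Cn n → ℂ}
    (hg : DifferentiableOn ℂ g (uball n)) {M : ℝ} (hM0 : 0 ≤ M)
    (hM : ∀ z ∈ uball n, ‖g z‖ ≤ M) : IsHardyMultiplier p θ g (ENNReal.ofReal M) := fun f hf =>
  have hnorm := hardyNorm_mul_le (θ := θ) (f := f) hp hM0 hM
  ⟨⟨hg.mul hf.1, hnorm.trans_lt (ENNReal.mul_lt_top ENNReal.ofReal_lt_top hf.2)⟩, hnorm⟩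

lemma IsHardyMultiplier.pow {g : Cn n → ℂ} {C : ℝ≥0∞} (hC : IsHardyMultiplier p θ g C)
    {f : Cn n → ℂ} (hf : MemHp p θ f) (k : ℕ) :
    MemHp p θ (fun z => g z ^ k * f z) ∧
      hardyNorm p θ (fun z => g z ^ k * f z) ≤ C ^ k * hardyNorm p θ f := by
  induction k with
  | zero => simpa using hf
  | succ k ih =>
    obtain ⟨hmem, hnorm⟩ := hC _ ih.1
    simp only [← mul_assoc, ← pow_succ'] at hmem hnorm
    refine ⟨hmem, hnorm.trans ?_⟩
    rw [pow_succ', mul_assoc]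
    gcongr
    exact ih.2

lemma IsHardyMultiplier.pow_mul_wMeas_le (hp : 0 < p) {g : Cn n → ℂ} {C A : ℝ} (hA : 0 ≤ A)
    (hC : IsHardyMultiplier p θ g (ENNReal.ofReal C))
    (hθ : Integrable θ (sphMeasure n)) {r : ℝ} (hr : r ∈ Ioo (0 : ℝ) 1) {U : Set (Sph n)}
    (hU : MeasurableSet U) (hgU : ∀ ζ ∈ U, A ≤ ‖g (r • (ζ : Cn n))‖) (k : ℕ) :
    (ENNReal.ofReal A ^ p) ^ k * wMeas θ U ≤ (ENNReal.ofReal C ^ p) ^ k * wMeas θ univ := by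
  have hcomm : ∀ x : ℝ≥0∞, (x ^ p) ^ k = (x ^ k) ^ p := fun x => by
    rw [← ENNReal.rpow_mul_natCast, mul_comm, ENNReal.rpow_natCast_mul]
  obtain ⟨-, hnorm⟩ := hC.pow (memHp_one hp hθ) k
  rw [hardyNorm_one] at hnorm
  calc (ENNReal.ofReal A ^ p) ^ k * wMeas θ U
      = ENNReal.ofReal (A ^ k) ^ p * wMeas θ U := by rw [hcomm, ENNReal.ofReal_pow hA]
    _ ≤ hardyFn p θ (fun z => g z ^ k * 1) r :=
        ofReal_rpow_mul_wMeas_le_hardyFn hp.le (pow_nonneg hA k) hU fun ζ hζ => by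
          simpa using pow_le_pow_left₀ hA (hgU ζ hζ) k
    _ ≤ hardyNorm p θ (fun z => g z ^ k * 1) ^ p := hardyFn_le_hardyNorm_rpow hp.ne' _ hr
    _ ≤ (ENNReal.ofReal C ^ k * wMeas θ univ ^ (1 / p)) ^ p := by gcongr
    _ = (ENNReal.ofReal C ^ p) ^ k * wMeas θ univ := by
        rw [ENNReal.mul_rpow_of_nonneg _ _ hp.le, one_div, ENNReal.rpow_inv_rpow hp.ne', hcomm]

lemma IsHardyMultiplier.norm_le (hp : 0 < p) (hθm : Measurable θ)
    (hθpos : ∀ᵐ ζ ∂sphMeasure n, 0 < θ ζ) (hθ : Integrable θ (sphMeasure n)) {g : Cn n → ℂ}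
    (hg : ContinuousOn g (uball n)) {C : ℝ} (hC0 : 0 ≤ C)
    (hC : IsHardyMultiplier p θ g (ENNReal.ofReal C)) {r : ℝ} (hr : r ∈ Ioo (0 : ℝ) 1)
    (ζ : Sph n) : ‖g (r • (ζ : Cn n))‖ ≤ C := by
  by_contra! hlt
  obtain ⟨A, hCA, hAg⟩ := exists_between hlt
  set U : Set (Sph n) := {η | A < ‖g (r • (η : Cn n))‖}
  have hcont : Continuous fun η : Sph n => g (r • (η : Cn n)) :=
    hg.comp_continuous (by fun_prop) (smul_mem_uball hr)
  have hU : IsOpen U := isOpen_lt continuous_const hcont.norm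
  have hUpos : wMeas θ U ≠ 0 := setLIntegral_ofReal_ne_zero hθm.aemeasurable hθpos hU ⟨ζ, hAg⟩
  refine hUpos (ENNReal.eq_zero_of_forall_pow_mul_le ?_ (by simp [hp.le]) ?_
    (hC.pow_mul_wMeas_le hp (hC0.trans hCA.le) hθ hr hU.measurableSet fun η hη => hη.le))
  · exact ENNReal.rpow_lt_rpow ((ENNReal.ofReal_lt_ofReal_iff (hC0.trans_lt hCA)).2 hCA) hp
  · simpa [wMeas] using hθ.lintegral_lt_top.ne

end Hardy

theorem multiplier_hardy_iff_bounded_general (n : ℕ)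
    (p : ℝ) (hp : 1 < p) (θ : Sph n → ℝ) (hθ : MemAp p θ)
    (g : Cn n → ℂ) (hg : DifferentiableOn ℂ g (uball n)) :
    (∃ C : ℝ, 0 < C ∧ ∀ f : Cn n → ℂ, MemHp p θ f →
        MemHp p θ (fun z => g z * f z) ∧
        hardyNorm p θ (fun z => g z * f z) ≤ ENNReal.ofReal C * hardyNorm p θ f) ↔
      ∃ M : ℝ, ∀ z ∈ uball n, ‖g z‖ ≤ M := by
  obtain ⟨hθm, hθpos, hθint, -⟩ := hθ
  have hp0 : 0 < p := one_pos.trans hp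
  constructor
  · rintro ⟨C, hC0, hC⟩
    refine ⟨max C ‖g 0‖, fun z hz => ?_⟩
    rcases eq_or_ne z 0 with rfl | hz0
    · exact le_max_right _ _
    obtain ⟨r, hr, ζ, rfl⟩ := exists_eq_smul_of_mem_uball hz hz0
    exact (IsHardyMultiplier.norm_le hp0 hθm hθpos hθint hg.continuousOn hC0.le hC hr ζ).trans
      (le_max_left _ _)
  · rintro ⟨M, hM⟩
    exact ⟨max M 1, by positivity, isHardyMultiplier_of_norm_le hp0 hg (by positivity)
      fun z hz => (hM z hz).trans (le_max_left _ _)⟩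

/-- A holomorphic `g` is a pointwise multiplier of `H^p(θ)` (with multiplier bound `C`)
iff `g` is bounded on `B` (Proposition 3.1). -/
theorem multiplier_hardy_iff_bounded (n : ℕ) (hn : 1 ≤ n)
    (p : ℝ) (hp : 1 < p) (θ : Sph n → ℝ) (hθ : MemAp p θ)
    (g : Cn n → ℂ) (hg : DifferentiableOn ℂ g (uball n)) :
    (∃ C : ℝ, 0 < C ∧ ∀ f : Cn n → ℂ, MemHp p θ f →
        MemHp p θ (fun z => g z * f z) ∧
        hardyNorm p θ (fun z => g z * f z) ≤ ENNReal.ofReal C * hardyNorm p θ f) ↔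
      ∃ M : ℝ, ∀ z ∈ uball n, ‖g z‖ ≤ M :=
  multiplier_hardy_iff_bounded_general n p hp θ hθ g hg
end
end

section
/- Let n ≥ 1, 1 < p < ∞, and 0 < s ≤ n/p. Then there exists a constant C > 0 such that for every f holomorphic on B: ‖f‖_{H^p} ≤ C ‖f‖_{HM^{p,s}} and ‖f‖_{HM^{p,s}} ≤ C ‖f‖_{H^{n/s}}, where for 0 < q < ∞ the (unweighted) Hardy norm is ‖f‖_{H^q} = (sup_{0<r<1} ∫_{∂B} |f(rζ)|^q dσ(ζ))^{1/q}. In particular H^{n/s} ⊆ HM^{p,s} ⊆ H^p. -/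
open MeasureTheory Metric Set
open scoped ENNReal ComplexConjugate

noncomputable section

/-! The Hardy norm is dominated by the Morrey norm because the cap `I_{ζ,3}` is the whole
sphere. Conversely, the cap `I_{ζ,ε}` has measure `O(ε^n)`: the cone `(0,1)·I_{ζ,ε}` lies in a
box of sides `1` and `ε` in the real directions `ζ` and `iζ` and `√(2ε)` in the remaining
`2n - 2` ones. Hölder's inequality on the cap then gives
`ε^{s-n/p} ‖f‖_{L^p(I_{ζ,ε})} ≤ ε^{s-n/p} σ(I_{ζ,ε})^{1/p-s/n} ‖f‖_{L^{n/s}} = O(‖f‖_{L^{n/s}})`. -/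

open scoped Pointwise InnerProductSpace

variable {n : ℕ}

lemma herm_eq_inner (z w : Cn n) : herm z w = ⟪w, z⟫_ℂ := by
  rw [herm, PiLp.inner_apply]
  exact Finset.sum_congr rfl fun j _ => by simp [RCLike.inner_apply]

lemma norm_herm_le_one (η ζ : Sph n) : ‖herm (η : Cn n) ζ‖ ≤ 1 := by
  simpa [herm_eq_inner] using norm_inner_le_norm (𝕜 := ℂ) (ζ : Cn n) η

lemma Icap_eq_univ (ζ : Sph n) {r : ℝ} (hr : 2 < r) : Icap (ζ : Cn n) r = univ :=
  eq_univ_of_forall fun η => calc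
    ‖(1 : ℂ) - herm (η : Cn n) ζ‖ ≤ ‖(1 : ℂ)‖ + ‖herm (η : Cn n) ζ‖ := norm_sub_le _ _
    _ ≤ 2 := by rw [norm_one]; linarith [norm_herm_le_one η ζ]
    _ < r := hr

lemma measurableSet_Icap (ζ : Cn n) (r : ℝ) : MeasurableSet (Icap ζ r) := by
  have : Continuous fun η : Sph n => ‖(1 : ℂ) - herm (η : Cn n) ζ‖ := by
    simp only [herm_eq_inner]
    fun_prop
  exact measurableSet_lt this.measurable measurable_const

lemma finrank_real_Cn : Module.finrank ℝ (Cn n) = 2 * n := by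
  rw [← Module.finrank_mul_finrank ℝ ℂ (Cn n), Complex.finrank_real_complex,
    finrank_euclideanSpace_fin]

lemma ne_zero_of_sph (ζ : Sph n) : n ≠ 0 := by
  rintro rfl
  simpa [Subsingleton.elim (ζ : Cn 0) 0] using norm_eq_of_mem_sphere ζ

lemma real_inner_eq_re_inner_Cn (x y : Cn n) : ⟪x, y⟫_ℝ = (⟪x, y⟫_ℂ).re := rfl

lemma orthonormal_I_smul {u : Cn n} (hu : ‖u‖ = 1) : Orthonormal ℝ ![u, Complex.I • u] := by
  rw [orthonormal_iff_ite]
  simp [Fin.forall_fin_two, real_inner_eq_re_inner_Cn, hu]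

lemma exists_orthonormalBasis_I_smul {k : ℕ} (ζ : Sph (k + 1)) :
    ∃ b : OrthonormalBasis (Fin 2 ⊕ Fin (2 * k)) ℝ (Cn (k + 1)),
      b (.inl 0) = ζ ∧ b (.inl 1) = Complex.I • (ζ : Cn (k + 1)) := by
  have hw := orthonormal_I_smul (norm_eq_of_mem_sphere ζ)
  have hv : Orthonormal ℝ ((range Sum.inl).domRestrict
      (Sum.elim ![(ζ : Cn (k + 1)), Complex.I • (ζ : Cn (k + 1))] 0 : Fin 2 ⊕ Fin (2 * k) → _)) := by
    rw [orthonormal_iff_ite] at hw ⊢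
    rintro ⟨_, i, rfl⟩ ⟨_, j, rfl⟩
    simpa [Subtype.ext_iff] using hw i j
  obtain ⟨b, hb⟩ := hv.exists_orthonormalBasis_extension_of_card_eq (by simp [finrank_real_Cn]; ring)
  exact ⟨b, by simpa using hb (.inl 0) ⟨0, rfl⟩, by simpa using hb (.inl 1) ⟨1, rfl⟩⟩

lemma inner_bounds_of_mem_cone {ζ : Sph n} {ε : ℝ} {x : Cn n}
    (hx : x ∈ Ioo (0 : ℝ) 1 • (Subtype.val '' Icap (ζ : Cn n) ε)) :
    ‖⟪(ζ : Cn n), x⟫_ℂ‖ ≤ 1 ∧ |(⟪(ζ : Cn n), x⟫_ℂ).im| ≤ ε ∧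
      ‖x‖ ^ 2 - ‖⟪(ζ : Cn n), x⟫_ℂ‖ ^ 2 ≤ 2 * ε := by
  obtain ⟨t, ⟨ht₀, ht₁⟩, _, ⟨η, hη, rfl⟩, rfl⟩ := hx
  set w := ⟪(ζ : Cn n), η⟫_ℂ
  have hw : ‖w‖ ≤ 1 := by simpa [w, herm_eq_inner] using norm_herm_le_one η ζ
  have hwε : ‖1 - w‖ < ε := by simpa [Icap, herm_eq_inner] using hη
  have htw : ⟪(ζ : Cn n), t • (η : Cn n)⟫_ℂ = t * w := by
    rw [← Complex.coe_smul, inner_smul_right]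
  rw [htw, norm_smul, norm_eq_of_mem_sphere, norm_mul, Complex.norm_real, Real.norm_eq_abs,
    abs_of_pos ht₀, Complex.im_ofReal_mul, abs_mul, abs_of_pos ht₀]
  have him : |w.im| ≤ ‖1 - w‖ := by simpa using Complex.abs_im_le_norm (1 - w)
  have hre : 1 - ‖w‖ ≤ ‖1 - w‖ := by simpa using norm_sub_norm_le (1 : ℂ) w
  refine ⟨by nlinarith [norm_nonneg w], by nlinarith [abs_nonneg w.im], ?_⟩
  -- `t²(1 - |w|²) ≤ 1 - |w|² ≤ 2(1 - |w|) ≤ 2|1 - w|`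
  nlinarith [norm_nonneg w, mul_nonneg (sub_nonneg.2 (sq_le_one_iff₀ ht₀.le |>.2 ht₁.le))
    (sub_nonneg.2 (sq_le_one_iff₀ (norm_nonneg w) |>.2 hw))]

section OrthonormalBasis

variable {ι : Type*} [Fintype ι]

lemma repr_apply_eq_re_inner (b : OrthonormalBasis ι ℝ (Cn n)) (x : Cn n) (i : ι) :
    b.repr x i = (⟪b i, x⟫_ℂ).re := by
  rw [b.repr_apply_apply]
  rfl

variable {b : OrthonormalBasis ι ℝ (Cn n)} {u : Cn n}

lemma repr_of_eq_I_smul {i : ι} (hi : b i = Complex.I • u) (x : Cn n) :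
    b.repr x i = (⟪u, x⟫_ℂ).im := by
  simp [repr_apply_eq_re_inner, hi]

lemma sq_repr_le_of_ne {i₀ i₁ : ι} (h₀₁ : i₀ ≠ i₁) (hb₀ : b i₀ = u)
    (hb₁ : b i₁ = Complex.I • u) (x : Cn n) {i : ι} (hi₀ : i ≠ i₀) (hi₁ : i ≠ i₁) :
    b.repr x i ^ 2 ≤ ‖x‖ ^ 2 - ‖⟪u, x⟫_ℂ‖ ^ 2 := by
  classical
  have hsum := b.sum_sq_inner_right x
  simp only [← b.repr_apply_apply] at hsum
  have hsub : ({i₀, i₁, i} : Finset ι) ⊆ Finset.univ := Finset.subset_univ _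
  have hle := Finset.sum_le_sum_of_subset_of_nonneg hsub fun j _ _ => sq_nonneg (b.repr x j)
  rw [Finset.sum_insert (by simp [h₀₁, hi₀.symm]), Finset.sum_pair hi₁.symm, hsum,
    repr_apply_eq_re_inner, hb₀, repr_of_eq_I_smul hb₁, ← Complex.sq_norm_sub_sq_re] at hle
  linarith

end OrthonormalBasis

lemma OrthonormalBasis.volume_setOf_abs_repr_le {ι E : Type*} [Fintype ι]
    [NormedAddCommGroup E] [InnerProductSpace ℝ E] [FiniteDimensional ℝ E]
    [MeasurableSpace E] [BorelSpace E] (b : OrthonormalBasis ι ℝ E) (a : ι → ℝ) :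
    volume {x : E | ∀ i, |b.repr x i| ≤ a i} = ∏ i, ENNReal.ofReal (2 * a i) := by
  have hbox : {x : E | ∀ i, |b.repr x i| ≤ a i} = b.repr ⁻¹'
      ((MeasurableEquiv.toLp 2 (ι → ℝ)).symm ⁻¹' univ.pi fun i => Icc (-a i) (a i)) := by
    ext x
    simp [abs_le, Pi.le_def, forall_and]
  rw [hbox, b.measurePreserving_repr.measure_preimage
      (measurableSet_preimage (MeasurableEquiv.measurable _)
        (.univ_pi fun _ => measurableSet_Icc)).nullMeasurableSet,
    (EuclideanSpace.volume_preserving_symm_measurableEquiv_toLp ι).measure_preimage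
      (MeasurableSet.univ_pi fun _ => measurableSet_Icc).nullMeasurableSet,
    volume_pi_pi]
  simp only [Real.volume_Icc, sub_neg_eq_add, two_mul]

lemma sphMeasure_Icap_le (ζ : Sph n) {ε : ℝ} (hε : 0 < ε) :
    sphMeasure n (Icap (ζ : Cn n) ε) ≤ ENNReal.ofReal (n * 8 ^ n * ε ^ n) := by
  obtain ⟨k, rfl⟩ := Nat.exists_eq_succ_of_ne_zero (ne_zero_of_sph ζ)
  obtain ⟨b, hb₀, hb₁⟩ := exists_orthonormalBasis_I_smul ζ
  let a : Fin 2 ⊕ Fin (2 * k) → ℝ := Sum.elim ![1, ε] fun _ => √(2 * ε)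
  have hcone : Ioo (0 : ℝ) 1 • (Subtype.val '' Icap (ζ : Cn (k + 1)) ε) ⊆
      {x | ∀ i, |b.repr x i| ≤ a i} := by
    intro x hx
    obtain ⟨hw, him, hrest⟩ := inner_bounds_of_mem_cone hx
    rintro (i | j)
    · fin_cases i
      · simpa [a, repr_apply_eq_re_inner, hb₀] using (Complex.abs_re_le_norm _).trans hw
      · simpa [a, repr_of_eq_I_smul hb₁] using him
    · refine Real.abs_le_sqrt ?_
      have := sq_repr_le_of_ne (by simp) hb₀ hb₁ x (i := .inr j) (by simp) (by simp)
      linarith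
  have hsqrt : (2 * √(2 * ε)) ^ (2 * k) = (8 * ε) ^ k := by
    rw [pow_mul, mul_pow, Real.sq_sqrt (by positivity)]
    ring
  calc sphMeasure (k + 1) (Icap (ζ : Cn (k + 1)) ε)
      = (2 * (k + 1) : ℕ) * volume (Ioo (0 : ℝ) 1 • (Subtype.val '' Icap (ζ : Cn (k + 1)) ε)) := by
        rw [sphMeasure, Measure.toSphere_apply' _ (measurableSet_Icap _ _), finrank_real_Cn]
    _ ≤ (2 * (k + 1) : ℕ) * ∏ i, ENNReal.ofReal (2 * a i) := by
        rw [← b.volume_setOf_abs_repr_le]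
        gcongr
    _ = ENNReal.ofReal ((k + 1 : ℕ) * 8 ^ (k + 1) * ε ^ (k + 1)) := by
        rw [← ENNReal.ofReal_natCast, ← ENNReal.ofReal_prod_of_nonneg fun i _ => by
          rcases i with i | i
          · fin_cases i <;> simp [a, hε.le]
          · simp only [a, Sum.elim_inr]; positivity, ← ENNReal.ofReal_mul (by positivity)]
        simp only [Fintype.prod_sum_type, Fin.prod_univ_two, a, Sum.elim_inl, Sum.elim_inr,
          Matrix.cons_val_zero, Matrix.cons_val_one, Finset.prod_const, Finset.card_univ,
          Fintype.card_fin, hsqrt]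
        congr 1
        push_cast
        ring

lemma rpow_lintegral_ofReal_norm_rpow {α E : Type*} [MeasurableSpace α] [NormedAddCommGroup E]
    (μ : Measure α) (g : α → E) {p : ℝ} (hp : 0 < p) :
    (∫⁻ x, ENNReal.ofReal (‖g x‖ ^ p) ∂μ) ^ (1 / p) = eLpNorm g (ENNReal.ofReal p) μ := by
  rw [eLpNorm_eq_lintegral_rpow_enorm_toReal (by simpa using hp) ENNReal.ofReal_ne_top,
    ENNReal.toReal_ofReal hp.le]
  congr 1
  refine lintegral_congr fun x => ?_
  rw [← ofReal_norm, ENNReal.ofReal_rpow_of_nonneg (norm_nonneg _) hp.le]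

lemma natCast_pos_and_pos_of_le_div {p s : ℝ} (hs : 0 < s) (hsn : s ≤ n / p) :
    0 < (n : ℝ) ∧ 0 < p :=
  (div_pos_iff.1 (hs.trans_le hsn)).resolve_right fun h => (Nat.cast_nonneg n).not_gt h.1

lemma morreyNorm_eq_iSup_eLpNorm {p : ℝ} (hp : 0 < p) (s : ℝ) (g : Sph n → ℂ) :
    morreyNorm n p s g = ⨆ (ζ : Sph n) (ε : ℝ) (_ : 0 < ε), ENNReal.ofReal (ε ^ (s - n / p)) *
      eLpNorm g (ENNReal.ofReal p) ((sphMeasure n).restrict (Icap (ζ : Cn n) ε)) := by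
  refine iSup_congr fun ζ => iSup_congr fun ε => iSup_congr fun hε => ?_
  rw [ENNReal.mul_rpow_of_nonneg _ _ (by positivity), rpow_lintegral_ofReal_norm_rpow _ _ hp,
    ENNReal.ofReal_rpow_of_nonneg (by positivity) (by positivity), ← Real.rpow_mul hε.le]
  congr 3
  field_simp

lemma eLpNorm_le_morreyNorm {p : ℝ} (hp : 0 < p) (s : ℝ) (g : Sph n → ℂ) :
    eLpNorm g (ENNReal.ofReal p) (sphMeasure n) ≤
      ENNReal.ofReal (3 ^ (n / p - s)) * morreyNorm n p s g := by
  rcases isEmpty_or_nonempty (Sph n) with _ | ⟨⟨ζ⟩⟩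
  · simp [Measure.eq_zero_of_isEmpty (sphMeasure n)]
  have hcancel : ENNReal.ofReal (3 ^ (n / p - s)) * ENNReal.ofReal (3 ^ (s - n / p)) = 1 := by
    rw [← ENNReal.ofReal_mul (by positivity), ← Real.rpow_add (by norm_num)]
    simp
  calc eLpNorm g (ENNReal.ofReal p) (sphMeasure n)
      = ENNReal.ofReal (3 ^ (n / p - s)) * (ENNReal.ofReal (3 ^ (s - n / p)) *
          eLpNorm g (ENNReal.ofReal p) ((sphMeasure n).restrict (Icap (ζ : Cn n) 3))) := by
        rw [Icap_eq_univ ζ (by norm_num), Measure.restrict_univ, ← mul_assoc, hcancel, one_mul]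
    _ ≤ ENNReal.ofReal (3 ^ (n / p - s)) * morreyNorm n p s g := by
        rw [morreyNorm_eq_iSup_eLpNorm hp]
        gcongr
        exact le_iSup₂_of_le ζ (3 : ℝ) (le_iSup_of_le (by norm_num) le_rfl)

lemma morreyNorm_le_eLpNorm {p s : ℝ} (hs : 0 < s) (hsn : s ≤ n / p) {g : Sph n → ℂ}
    (hg : AEStronglyMeasurable g (sphMeasure n)) :
    morreyNorm n p s g ≤ ENNReal.ofReal ((n * 8 ^ n) ^ (1 / p - s / n)) *
      eLpNorm g (ENNReal.ofReal (n / s)) (sphMeasure n) := by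
  obtain ⟨hn, hp⟩ := natCast_pos_and_pos_of_le_div hs hsn
  have hpq : ENNReal.ofReal p ≤ ENNReal.ofReal (n / s) :=
    ENNReal.ofReal_le_ofReal ((le_div_iff₀ hs).2 (by rwa [mul_comm, ← le_div_iff₀ hp]))
  have hexp : 0 ≤ 1 / p - s / n := by
    rw [sub_nonneg, div_le_div_iff₀ hn hp]
    rwa [one_mul, ← le_div_iff₀ hp]
  rw [morreyNorm_eq_iSup_eLpNorm hp]
  refine iSup_le fun ζ => iSup_le fun ε => iSup_le fun hε => ?_
  have hcancel : ε ^ (s - n / p) * (n * 8 ^ n * ε ^ n) ^ (1 / p - s / n) =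
      (n * 8 ^ n) ^ (1 / p - s / n) := by
    rw [Real.mul_rpow (by positivity) (by positivity), ← Real.rpow_natCast ε n,
      ← Real.rpow_mul hε.le, mul_left_comm, ← Real.rpow_add hε]
    field_simp
    simp
  calc ENNReal.ofReal (ε ^ (s - n / p)) *
        eLpNorm g (ENNReal.ofReal p) ((sphMeasure n).restrict (Icap (ζ : Cn n) ε))
      ≤ ENNReal.ofReal (ε ^ (s - n / p)) *
          (eLpNorm g (ENNReal.ofReal (n / s)) ((sphMeasure n).restrict (Icap (ζ : Cn n) ε)) *
            sphMeasure n (Icap (ζ : Cn n) ε) ^ (1 / p - s / n)) := by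
        gcongr
        simpa [ENNReal.toReal_ofReal hp.le, ENNReal.toReal_ofReal (div_pos hn hs).le] using
          eLpNorm_le_eLpNorm_mul_rpow_measure_univ hpq hg.restrict
    _ ≤ ENNReal.ofReal (ε ^ (s - n / p)) * (eLpNorm g (ENNReal.ofReal (n / s)) (sphMeasure n) *
          ENNReal.ofReal (n * 8 ^ n * ε ^ n) ^ (1 / p - s / n)) := by
        gcongr
        · exact Measure.restrict_le_self
        · exact sphMeasure_Icap_le ζ hε
    _ = ENNReal.ofReal ((n * 8 ^ n) ^ (1 / p - s / n)) *
          eLpNorm g (ENNReal.ofReal (n / s)) (sphMeasure n) := by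
        rw [ENNReal.ofReal_rpow_of_nonneg (by positivity) hexp, mul_left_comm,
          ← ENNReal.ofReal_mul (by positivity), hcancel, mul_comm]

lemma continuous_comp_smul_sph {f : Cn n → ℂ} (hf : ContinuousOn f (uball n)) {r : ℝ}
    (hr : |r| < 1) : Continuous fun ζ : Sph n => f (r • (ζ : Cn n)) :=
  hf.comp_continuous (by fun_prop) fun ζ => by
    simpa [uball, norm_smul, norm_eq_of_mem_sphere] using hr

lemma hardyNormU_eq_iSup_eLpNorm {q : ℝ} (hq : 0 < q) (f : Cn n → ℂ) :
    hardyNormU q f = ⨆ r ∈ Ioo (0 : ℝ) 1,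
      eLpNorm (fun ζ : Sph n => f (r • (ζ : Cn n))) (ENNReal.ofReal q) (sphMeasure n) := by
  simp_rw [hardyNormU, ← rpow_lintegral_ofReal_norm_rpow _ _ hq]
  exact (ENNReal.orderIsoRpow (1 / q) (by positivity)).map_iSup₂ _

theorem morrey_hardy_embedding_general (n : ℕ) (p s : ℝ) (hs : 0 < s) (hsn : s ≤ n / p) :
    ∃ C : ℝ, 0 < C ∧ ∀ f : Cn n → ℂ, DifferentiableOn ℂ f (uball n) →
      hardyNormU p f ≤ ENNReal.ofReal C * hmNorm p s f ∧
      hmNorm p s f ≤ ENNReal.ofReal C * hardyNormU ((n : ℝ) / s) f ∧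
      (hardyNormU ((n : ℝ) / s) f < ⊤ → MemHM p s f) ∧
      (MemHM p s f → hardyNormU p f < ⊤) := by
  obtain ⟨hn, hp⟩ := natCast_pos_and_pos_of_le_div hs hsn
  set C := max ((3 : ℝ) ^ (n / p - s)) ((n * 8 ^ n) ^ (1 / p - s / n))
  refine ⟨C, by positivity, fun f hf => ?_⟩
  have hHM : hardyNormU p f ≤ ENNReal.ofReal C * hmNorm p s f := by
    rw [hardyNormU_eq_iSup_eLpNorm hp, hmNorm]
    simp only [ENNReal.mul_iSup]
    refine iSup₂_mono fun r _ => ?_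
    exact (eLpNorm_le_morreyNorm hp s _).trans (by gcongr; exact le_max_left _ _)
  have hMH : hmNorm p s f ≤ ENNReal.ofReal C * hardyNormU ((n : ℝ) / s) f := by
    rw [hardyNormU_eq_iSup_eLpNorm (by positivity), hmNorm]
    simp only [ENNReal.mul_iSup]
    refine iSup₂_mono fun r hr => ?_
    have hfr := continuous_comp_smul_sph hf.continuousOn (abs_lt.2 ⟨by linarith [hr.1], hr.2⟩)
    exact (morreyNorm_le_eLpNorm hs hsn hfr.aestronglyMeasurable).trans
      (by gcongr; exact le_max_right _ _)
  exact ⟨hHM, hMH, fun h => ⟨hf, hMH.trans_lt (ENNReal.mul_lt_top ENNReal.ofReal_lt_top h)⟩,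
    fun h => hHM.trans_lt (ENNReal.mul_lt_top ENNReal.ofReal_lt_top h.2)⟩

/-- Embeddings between Hardy and Morrey spaces (Proposition 2.7):
`H^{n/s} ⊆ HM^{p,s} ⊆ H^p`, with norm estimates. -/
theorem morrey_hardy_embedding (n : ℕ) (hn : 1 ≤ n)
    (p s : ℝ) (hp : 1 < p) (hs : 0 < s) (hsn : s ≤ n / p) :
    ∃ C : ℝ, 0 < C ∧ ∀ f : Cn n → ℂ, DifferentiableOn ℂ f (uball n) →
      hardyNormU p f ≤ ENNReal.ofReal C * hmNorm p s f ∧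
      hmNorm p s f ≤ ENNReal.ofReal C * hardyNormU ((n : ℝ) / s) f ∧
      (hardyNormU ((n : ℝ) / s) f < ⊤ → MemHM p s f) ∧
      (MemHM p s f → hardyNormU p f < ⊤) :=
  morrey_hardy_embedding_general n p s hs hsn
end
end
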